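/- arXiv:1410.5167 — 2 statements merged into one kernel-verified Lean document; each statement's English description precedes it below -/
import Mathlib

section
/- Let Ω ⊂ X be a nonempty bounded open set with C_p(X∖Ω) > 0, let E ⊂ Ω with cap_p(E,Ω) < ∞, let u_E be the Cheeger capacitary potential of E in Ω and ν_E = Tu_E the associated capacitary measure. Then ∫_Ω φ dν_E = 0 for every φ ∈ N^{1,p}_0(Ω∖E). -/
open MeasureTheory Metric Set Filter Topology
open scoped ENNReal NNReal

noncomputable section

namespace FinePotential

/-- A (nonconstant, compact, rectifiable) curve in `Y`, parameterized by arc length,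
modeled as a `1`-Lipschitz map on `[0, l]`. -/
structure Curve (Y : Type*) [PseudoMetricSpace Y] where
  l : ℝ
  l_pos : 0 < l
  toFun : ℝ → Y
  lip : LipschitzOnWith 1 toFun (Set.Icc 0 l)
  nonconst : ∃ s ∈ Set.Icc (0 : ℝ) l, ∃ t ∈ Set.Icc (0 : ℝ) l, toFun s ≠ toFun t

section General

variable {Y : Type*} [PseudoMetricSpace Y] [MeasurableSpace Y]

/-- The line integral `∫_γ g ds` along an arc-length parameterized curve. -/
def curveIntegral (γ : Curve Y) (g : Y → ℝ≥0∞) : ℝ≥0∞ :=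
  ∫⁻ t in Set.Icc 0 γ.l, g (γ.toFun t)

/-- `g` is an upper gradient of `f`. -/
def IsUpperGradient (f : Y → ℝ) (g : Y → ℝ≥0∞) : Prop :=
  Measurable g ∧ ∀ γ : Curve Y,
    ENNReal.ofReal |f (γ.toFun 0) - f (γ.toFun γ.l)| ≤ curveIntegral γ g

/-- The curve family `Γ` has zero `p`-modulus. -/
def ZeroPModulus (p : ℝ) (μ : Measure Y) (Γ : Set (Curve Y)) : Prop :=
  ∃ ρ : Y → ℝ≥0∞, Measurable ρ ∧ (∫⁻ y, ρ y ^ p ∂μ) ≠ ∞ ∧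
    ∀ γ ∈ Γ, curveIntegral γ ρ = ∞

/-- `g` is a `p`-weak upper gradient of `f`. -/
def IsWeakUpperGradient (p : ℝ) (μ : Measure Y) (f : Y → ℝ) (g : Y → ℝ≥0∞) : Prop :=
  Measurable g ∧ ∃ Γ : Set (Curve Y), ZeroPModulus p μ Γ ∧
    ∀ γ ∉ Γ, ENNReal.ofReal |f (γ.toFun 0) - f (γ.toFun γ.l)| ≤ curveIntegral γ g

/-- Membership in the Newtonian space `N^{1,p}(Y, μ)`. -/
def MemN1p (p : ℝ) (μ : Measure Y) (f : Y → ℝ) : Prop :=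
  Measurable f ∧ (∫⁻ y, ENNReal.ofReal |f y| ^ p ∂μ) ≠ ∞ ∧
    ∃ g, IsUpperGradient f g ∧ (∫⁻ y, g y ^ p ∂μ) ≠ ∞

/-- The `p`-th power `‖f‖_{N^{1,p}}^p` of the Newtonian norm. -/
def n1pNormP (p : ℝ) (μ : Measure Y) (f : Y → ℝ) : ℝ≥0∞ :=
  (∫⁻ y, ENNReal.ofReal |f y| ^ p ∂μ) +
    ⨅ (g : Y → ℝ≥0∞) (_ : IsUpperGradient f g), ∫⁻ y, g y ^ p ∂μ

/-- The energy `∫ g_f^p dμ` of the minimal `p`-weak upper gradient of `f`. -/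
def weakGradEnergy (p : ℝ) (μ : Measure Y) (f : Y → ℝ) : ℝ≥0∞ :=
  ⨅ (g : Y → ℝ≥0∞) (_ : IsWeakUpperGradient p μ f g), ∫⁻ y, g y ^ p ∂μ

/-- The Sobolev capacity `C_p`. -/
def sobolevCapacity (p : ℝ) (μ : Measure Y) (E : Set Y) : ℝ≥0∞ :=
  ⨅ (f : Y → ℝ) (_ : MemN1p p μ f) (_ : ∀ x ∈ E, 1 ≤ f x), n1pNormP p μ f

/-- Membership in the Dirichlet space `D^p(Y, μ)`. -/
def MemDp (p : ℝ) (μ : Measure Y) (f : Y → ℝ) : Prop :=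
  Measurable f ∧ ∃ g, IsUpperGradient f g ∧ (∫⁻ y, g y ^ p ∂μ) ≠ ∞

/-- `g` is the minimal `p`-weak upper gradient of `f`: it is a `p`-weak upper gradient
and it is `≤` a.e. than every locally `p`-integrable `p`-weak upper gradient. -/
def IsMinimalWeakUpperGradient (p : ℝ) (μ : Measure Y) (f : Y → ℝ) (g : Y → ℝ≥0∞) : Prop :=
  IsWeakUpperGradient p μ f g ∧
    ∀ h : Y → ℝ≥0∞, IsWeakUpperGradient p μ f h →
      (∀ y : Y, ∃ r : ℝ, 0 < r ∧ (∫⁻ z in Metric.ball y r, h z ^ p ∂μ) ≠ ∞) →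
      ∀ᵐ y ∂μ, g y ≤ h y

end General

section MetricDefs

variable {X : Type*} [MetricSpace X] [MeasurableSpace X]

/-- `N^{1,p}(A)`, for `A ⊆ X`, with `(A, d|_A, μ|_A)` as the underlying metric
measure space. -/
def MemN1pOn (p : ℝ) (μ : Measure X) (A : Set X) (f : X → ℝ) : Prop :=
  MemN1p p (μ.comap (Subtype.val : A → X)) (fun y : A => f ↑y)

/-- `u ∈ D^p_loc(X)`: every point has a ball on which `u` belongs to the Dirichlet
space of the ball. -/
def MemDpLoc (p : ℝ) (μ : Measure X) (f : X → ℝ) : Prop :=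
  ∀ x : X, ∃ r : ℝ, 0 < r ∧
    MemDp p (μ.comap (Subtype.val : Metric.ball x r → X))
      (fun y : Metric.ball x r => f ↑y)

/-- `N^{1,p}_0(A)`: Newtonian functions (extended by zero) vanishing outside `A`. -/
def MemN1p0 (p : ℝ) (μ : Measure X) (A : Set X) (f : X → ℝ) : Prop :=
  MemN1p p μ f ∧ ∀ x ∉ A, f x = 0

/-- `u ∈ N^{1,p}_loc(Ω)`. -/
def MemN1pLocOn (p : ℝ) (μ : Measure X) (Ω : Set X) (f : X → ℝ) : Prop :=
  ∀ x ∈ Ω, ∃ r : ℝ, 0 < r ∧ MemN1pOn p μ (Metric.ball x r ∩ Ω) f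

/-- The variational capacity `cap_p(E, Ω)`. -/
def varCap (p : ℝ) (μ : Measure X) (E Ω : Set X) : ℝ≥0∞ :=
  ⨅ (f : X → ℝ) (_ : MemN1p0 p μ Ω f) (_ : ∀ x ∈ E, 1 ≤ f x), weakGradEnergy p μ f

/-- The integrand in the Wiener-type definition of thinness, with the convention
that it equals `1` whenever `cap_p(B(x,r), B(x,2r)) = 0`. -/
def thinIntegrand (p : ℝ) (μ : Measure X) (E : Set X) (x : X) (r : ℝ) : ℝ≥0∞ :=
  if varCap p μ (Metric.ball x r) (Metric.ball x (2 * r)) = 0 then 1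
  else (varCap p μ (E ∩ Metric.ball x r) (Metric.ball x (2 * r)) /
      varCap p μ (Metric.ball x r) (Metric.ball x (2 * r))) ^ (1 / (p - 1))

/-- `E` is thin at `x`. -/
def IsThinAt (p : ℝ) (μ : Measure X) (E : Set X) (x : X) : Prop :=
  (∫⁻ r in Set.Ioc (0 : ℝ) 1, thinIntegrand p μ E x r * ENNReal.ofReal (1 / r)) ≠ ∞

/-- `U` is finely open: its complement is thin at every point of `U`. -/
def FinelyOpen (p : ℝ) (μ : Measure X) (U : Set X) : Prop :=
  ∀ x ∈ U, IsThinAt p μ Uᶜ x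

/-- The base `b_p E`: the set of points where `E` is thick (not thin). -/
def pBase (p : ℝ) (μ : Measure X) (E : Set X) : Set X :=
  {x : X | ¬ IsThinAt p μ E x}

/-- `U` is quasiopen. -/
def Quasiopen (p : ℝ) (μ : Measure X) (U : Set X) : Prop :=
  ∀ ε : ℝ≥0∞, 0 < ε → ∃ G : Set X, IsOpen G ∧ sobolevCapacity p μ G < ε ∧ IsOpen (G ∪ U)

/-- `u` is quasicontinuous on `E`. -/
def QuasicontinuousOn (p : ℝ) (μ : Measure X) (E : Set X) (u : X → EReal) : Prop :=
  ∀ ε : ℝ≥0∞, 0 < ε → ∃ G : Set X, IsOpen G ∧ sobolevCapacity p μ G < ε ∧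
    (∀ x ∈ E \ G, u x ≠ ⊤ ∧ u x ≠ ⊥) ∧ ContinuousOn u (E \ G)

/-- The fine topology: the topology generated by the finely open sets (which form
a topology). -/
def fineTopology (p : ℝ) (μ : Measure X) : TopologicalSpace X :=
  TopologicalSpace.generateFrom {U : Set X | FinelyOpen p μ U}

/-- `u` is finely continuous on `s`, i.e. continuous on `s` from the fine topology
to the usual topology of `[-∞, ∞]`. -/
def FinelyContinuousOn (p : ℝ) (μ : Measure X) (u : X → EReal) (s : Set X) : Prop :=
  @ContinuousOn X EReal (fineTopology p μ) inferInstance u s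

/-- The fine closure of `E`. -/
def fineClosure (p : ℝ) (μ : Measure X) (E : Set X) : Set X :=
  @closure X (fineTopology p μ) E

/-- The fine interior of `E`. -/
def fineInterior (p : ℝ) (μ : Measure X) (E : Set X) : Set X :=
  @interior X (fineTopology p μ) E

/-- The fine boundary `∂_p E` of `E`. -/
def fineBoundary (p : ℝ) (μ : Measure X) (E : Set X) : Set X :=
  fineClosure p μ E \ fineInterior p μ E

/-- `μ` is a doubling measure giving finite positive mass to all balls. -/
def IsDoubling (μ : Measure X) : Prop :=
  (∀ (x : X) (r : ℝ), 0 < r → 0 < μ (Metric.ball x r) ∧ μ (Metric.ball x r) < ∞) ∧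
    ∃ C : ℝ, 0 < C ∧ ∀ (x : X) (r : ℝ), 0 < r →
      μ (Metric.ball x (2 * r)) ≤ ENNReal.ofReal C * μ (Metric.ball x r)

/-- `X` supports a `p`-Poincaré inequality. -/
def SupportsPoincare (p : ℝ) (μ : Measure X) : Prop :=
  ∃ C : ℝ, 0 < C ∧ ∃ lam : ℝ, 1 ≤ lam ∧
    ∀ (x : X) (r : ℝ), 0 < r → ∀ f : X → ℝ, LocallyIntegrable f μ →
      ∀ g : X → ℝ≥0∞, IsUpperGradient f g →
        (μ (Metric.ball x r))⁻¹ *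
            (∫⁻ y in Metric.ball x r,
              ENNReal.ofReal |f y - ⨍ z in Metric.ball x r, f z ∂μ| ∂μ) ≤
          ENNReal.ofReal (C * Metric.diam (Metric.ball x r)) *
            ((μ (Metric.ball x (lam * r)))⁻¹ *
              ∫⁻ y in Metric.ball x (lam * r), g y ^ p ∂μ) ^ (1 / p)

/-- The property `P` holds quasieverywhere on `E`. -/
def QeOn (p : ℝ) (μ : Measure X) (E : Set X) (P : X → Prop) : Prop :=
  sobolevCapacity p μ {x ∈ E | ¬ P x} = 0

/-- `u` is lsc-regularized on `Ω`: `u(x) = ess liminf_{y → x} u(y)` for `x ∈ Ω`. -/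
def LscRegularized (μ : Measure X) (Ω : Set X) (u : X → ℝ) : Prop :=
  ∀ x ∈ Ω, Tendsto
    (fun r : ℝ => essInf (fun y => (u y : EReal)) (μ.restrict (Metric.ball x r)))
    (𝓝[>] (0 : ℝ)) (𝓝 (u x : EReal))

end MetricDefs

/-- A Cheeger differentiable structure on `X`: a measurable vector-valued gradient
`D`, linear in the function, together with pointwise inner products whose norms are
comparable to the minimal `p`-weak upper gradient. -/
structure CheegerStructure (X : Type*) [MetricSpace X] [MeasurableSpace X]
    (p : ℝ) (μ : Measure X) where
  N : ℕ
  D : (X → ℝ) → X → (Fin N → ℝ)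
  inn : X → (Fin N → ℝ) → (Fin N → ℝ) → ℝ
  inn_symm : ∀ x v w, inn x v w = inn x w v
  inn_add_left : ∀ x u v w, inn x (u + v) w = inn x u w + inn x v w
  inn_smul_left : ∀ (x : X) (c : ℝ) (v w : Fin N → ℝ), inn x (c • v) w = c * inn x v w
  inn_nonneg : ∀ x v, 0 ≤ inn x v v
  D_add : ∀ f g : X → ℝ, D (f + g) = fun x => D f x + D g x
  D_smul : ∀ (c : ℝ) (f : X → ℝ), D (fun x => c * f x) = fun x => c • D f x
  measurable_inn_D : ∀ f g : X → ℝ, Measurable f → Measurable g →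
    Measurable fun x => inn x (D f x) (D g x)
  comparable : ∃ C : ℝ, 0 < C ∧ ∀ f : X → ℝ, MemN1p p μ f →
    IsWeakUpperGradient p μ f
      (fun x => ENNReal.ofReal (C * Real.sqrt (inn x (D f x) (D f x)))) ∧
    ∀ g : X → ℝ≥0∞, IsWeakUpperGradient p μ f g →
      ∀ᵐ x ∂μ, ENNReal.ofReal (Real.sqrt (inn x (D f x) (D f x))) ≤ ENNReal.ofReal C * g x

section Cheeger

variable {X : Type*} [MetricSpace X] [MeasurableSpace X] {p : ℝ} {μ : Measure X}

/-- The inner product norm `|v|_x`. -/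
def CheegerStructure.normAt (S : CheegerStructure X p μ) (x : X) (v : Fin S.N → ℝ) : ℝ :=
  Real.sqrt (S.inn x v v)

/-- The form `(u, φ) ↦ ∫_Ω |Du|^{p-2} Du · Dφ dμ`. -/
def cheegerForm (S : CheegerStructure X p μ) (Ω : Set X) (u φ : X → ℝ) : ℝ :=
  ∫ x in Ω, S.normAt x (S.D u x) ^ (p - 2) * S.inn x (S.D u x) (S.D φ x) ∂μ

/-- The Cheeger `p`-energy `∫_Ω |Du|^p dμ`. -/
def cheegerEnergy (S : CheegerStructure X p μ) (Ω : Set X) (u : X → ℝ) : ℝ≥0∞ :=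
  ∫⁻ x in Ω, ENNReal.ofReal (S.normAt x (S.D u x) ^ p) ∂μ

/-- `φ ∈ Lip_c(Ω)`. -/
def MemLipc (Ω : Set X) (φ : X → ℝ) : Prop :=
  (∃ K : ℝ≥0, LipschitzWith K φ) ∧ HasCompactSupport φ ∧ tsupport φ ⊆ Ω

/-- `u` is a (Cheeger) supersolution in `Ω`. -/
def IsSupersolution (S : CheegerStructure X p μ) (Ω : Set X) (u : X → ℝ) : Prop :=
  MemN1pLocOn p μ Ω u ∧
    ∀ φ : X → ℝ, MemLipc Ω φ → (∀ x, 0 ≤ φ x) → 0 ≤ cheegerForm S Ω u φ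

/-- `h` is the continuous Cheeger `p`-harmonic function in `Ω'` with Sobolev boundary
values `v`, i.e. the continuous solution of the `K_{-∞,v}(Ω')`-Cheeger obstacle
problem. -/
def IsDirichletSolution (S : CheegerStructure X p μ) (Ω' : Set X) (v h : X → ℝ) : Prop :=
  ContinuousOn h Ω' ∧ MemN1p0 p μ Ω' (h - v) ∧
    ∀ w : X → ℝ, MemN1p0 p μ Ω' (w - v) → cheegerEnergy S Ω' h ≤ cheegerEnergy S Ω' w

/-- `u` (real-valued) is Cheeger superharmonic in the open set `G`. -/
def CheegerSuperharmonicOn (S : CheegerStructure X p μ) (G : Set X) (u : X → ℝ) : Prop :=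
  LowerSemicontinuousOn u G ∧
    ∀ Ω' : Set X, Ω'.Nonempty → IsOpen Ω' → IsCompact (closure Ω') → closure Ω' ⊆ G →
      sobolevCapacity p μ Ω'ᶜ ≠ 0 →
      ∀ v : X → ℝ, (∃ K : ℝ≥0, LipschitzWith K v) → (∀ x ∈ frontier Ω', v x ≤ u x) →
        ∀ h : X → ℝ, IsDirichletSolution S Ω' v h → ∀ x ∈ Ω', h x ≤ u x

/-- `u` is the Cheeger capacitary potential of `E` in `Ω`: the lsc-regularized
minimizer of the Cheeger `p`-energy among functions in `N^{1,p}_0(Ω)` that are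
`≥ 1` q.e. on `E`. -/
def IsCapacitaryPotential (S : CheegerStructure X p μ) (E Ω : Set X) (u : X → ℝ) : Prop :=
  MemN1p0 p μ Ω u ∧ QeOn p μ E (fun x => 1 ≤ u x) ∧ LscRegularized μ Ω u ∧
    ∀ v : X → ℝ, MemN1p0 p μ Ω v → QeOn p μ E (fun x => 1 ≤ v x) →
      cheegerEnergy S Ω u ≤ cheegerEnergy S Ω v

/-- `ν` is a Radon measure on `Ω` belonging to the dual `N^{1,p}_0(Ω)'`. -/
def IsRadonInDual (p : ℝ) (μ : Measure X) (Ω : Set X) (ν : Measure X) : Prop :=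
  ν Ωᶜ = 0 ∧ (∀ K : Set X, IsCompact K → ν K ≠ ∞) ∧
    ∃ C : ℝ≥0∞, ∀ φ : X → ℝ, MemN1p0 p μ Ω φ →
      (∫⁻ x, ENNReal.ofReal |φ x| ∂ν) ≤ C * n1pNormP p μ φ ^ (1 / p)

/-- `ν = T u_E` is the capacitary measure associated with the capacitary potential
`u_E` in `Ω`. -/
def IsCapacitaryMeasure (S : CheegerStructure X p μ) (Ω : Set X) (uE : X → ℝ)
    (ν : Measure X) : Prop :=
  IsRadonInDual p μ Ω ν ∧
    ∀ φ : X → ℝ, MemN1p0 p μ Ω φ → cheegerForm S Ω uE φ = ∫ x, φ x ∂ν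

end Cheeger

/-! Since `φ` vanishes on `E` and off `Ω`, every `u_E + tφ` competes with the capacitary
potential, so `t ↦ ∫_Ω |D(u_E + tφ)|^p dμ` is minimal at `t = 0`. Differentiating under the
integral sign, with the domination `|∂ₜ |A + tB|^p| ≤ p (|A| + |B|)^p` for `|t| ≤ 1`, gives the
Euler–Lagrange equation `∫_Ω |Du_E|^{p-2} Du_E · Dφ dμ = 0`, and the left-hand side is
`∫ φ dν_E` by the defining property of `ν_E`. -/

theorem hasDerivAt_quadratic_rpow {a b c p : ℝ} (hp : 1 < p)
    (hq : ∀ s, 0 ≤ a + 2 * b * s + c * s ^ 2) (t : ℝ) :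
    HasDerivAt (fun s => (a + 2 * b * s + c * s ^ 2) ^ (p / 2))
      (p * ((a + 2 * b * t + c * t ^ 2) ^ ((p - 2) / 2) * (b + c * t))) t := by
  have hderiv : HasDerivAt (fun s => a + 2 * b * s + c * s ^ 2) (2 * (b + c * t)) t :=
    ((((hasDerivAt_id t).const_mul (2 * b)).const_add a).add
      ((hasDerivAt_pow 2 t).const_mul c)).congr_deriv (by push_cast; ring)
  rcases (hq t).eq_or_lt with hzero | hpos
  · -- `t` minimizes the quadratic, so it is a double root: `q s = c (s - t)²`.
    have hcrit : b + c * t = 0 := by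
      have hmin : IsLocalMin (fun s => a + 2 * b * s + c * s ^ 2) t :=
        Eventually.of_forall fun s => hzero.symm.trans_le (hq s)
      linarith [hmin.hasDerivAt_eq_zero hderiv]
    have hsq : ∀ s, a + 2 * b * s + c * s ^ 2 = c * (s - t) ^ 2 := fun s => by
      linear_combination -hzero + 2 * (s - t) * hcrit
    have hc : 0 ≤ c := by simpa [hsq] using hq (t + 1)
    have habs := ((hasDerivAt_abs_rpow (t - t) hp).comp_sub_const t t).const_mul (c ^ (p / 2))
    have hfun : (fun s => (a + 2 * b * s + c * s ^ 2) ^ (p / 2)) =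
        fun s => c ^ (p / 2) * |s - t| ^ p := funext fun s => by
      rw [hsq, Real.mul_rpow hc (sq_nonneg _), ← sq_abs, ← Real.rpow_natCast,
        ← Real.rpow_mul (abs_nonneg _), Nat.cast_ofNat, mul_div_cancel₀ p two_ne_zero]
    rw [hfun, hcrit, mul_zero, mul_zero]
    exact habs.congr_deriv (by simp)
  · convert hderiv.rpow_const (p := p / 2) (Or.inl hpos.ne') using 1
    rw [show p / 2 - 1 = (p - 2) / 2 by ring]
    ring

theorem IsUpperGradient.add_const_mul {Y : Type*} [PseudoMetricSpace Y] [MeasurableSpace Y]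
    {u φ : Y → ℝ} {g h : Y → ℝ≥0∞} (hu : IsUpperGradient u g) (hφ : IsUpperGradient φ h)
    (t : ℝ) :
    IsUpperGradient (fun y => u y + t * φ y) (fun y => g y + ENNReal.ofReal |t| * h y) := by
  refine ⟨hu.1.add (measurable_const.mul hφ.1), fun γ => ?_⟩
  set a := γ.toFun 0
  set b := γ.toFun γ.l
  calc ENNReal.ofReal |u a + t * φ a - (u b + t * φ b)|
      ≤ ENNReal.ofReal (|u a - u b| + |t| * |φ a - φ b|) := by
        refine ENNReal.ofReal_le_ofReal ?_
        rw [← abs_mul, show u a + t * φ a - (u b + t * φ b) = u a - u b + t * (φ a - φ b) by ring]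
        exact abs_add_le _ _
    _ = ENNReal.ofReal |u a - u b| + ENNReal.ofReal |t| * ENNReal.ofReal |φ a - φ b| := by
        rw [ENNReal.ofReal_add (abs_nonneg _) (by positivity), ENNReal.ofReal_mul (abs_nonneg t)]
    _ ≤ curveIntegral γ g + ENNReal.ofReal |t| * curveIntegral γ h := by
        gcongr
        exacts [hu.2 γ, hφ.2 γ]
    _ ≤ curveIntegral γ g + ∫⁻ s in Icc 0 γ.l, ENNReal.ofReal |t| * h (γ.toFun s) := by
        gcongr
        exact lintegral_const_mul_le _ _
    _ ≤ curveIntegral γ (fun y => g y + ENNReal.ofReal |t| * h y) := le_lintegral_add _ _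

theorem IsUpperGradient.isWeakUpperGradient {Y : Type*} [PseudoMetricSpace Y]
    [MeasurableSpace Y] {p : ℝ} (hp : 0 < p) (μ : Measure Y) {f : Y → ℝ} {g : Y → ℝ≥0∞}
    (h : IsUpperGradient f g) : IsWeakUpperGradient p μ f g :=
  ⟨h.1, ∅, ⟨0, measurable_const, by simp [ENNReal.zero_rpow_of_pos hp], by simp⟩,
    fun γ _ => h.2 γ⟩

theorem lintegral_rpow_ne_top_of_le_add_const_mul {Y : Type*} [MeasurableSpace Y]
    {μ : Measure Y} {p : ℝ} (hp : 1 ≤ p) {f g h : Y → ℝ≥0∞} {c : ℝ≥0∞} (hc : c ≠ ∞)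
    (hle : ∀ y, h y ≤ f y + c * g y) (hf : AEMeasurable f μ) (hf' : ∫⁻ y, f y ^ p ∂μ ≠ ∞)
    (hg' : ∫⁻ y, g y ^ p ∂μ ≠ ∞) : ∫⁻ y, h y ^ p ∂μ ≠ ∞ := by
  have hcg : ∫⁻ y, (c * g y) ^ p ∂μ = c ^ p * ∫⁻ y, g y ^ p ∂μ := by
    simp_rw [ENNReal.mul_rpow_of_nonneg _ _ (by linarith : (0 : ℝ) ≤ p)]
    exact lintegral_const_mul' _ _ (ENNReal.rpow_ne_top_of_nonneg (by linarith) hc)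
  have hsum := ENNReal.lintegral_rpow_add_lt_top_of_lintegral_rpow_lt_top
    (g := fun y => c * g y) hf hf'.lt_top
    (by rw [hcg]; exact ENNReal.mul_lt_top (by finiteness) hg'.lt_top) hp
  exact ((lintegral_mono fun y => ENNReal.rpow_le_rpow (hle y) (by linarith)).trans_lt hsum).ne

theorem MemN1p.add_const_mul {Y : Type*} [PseudoMetricSpace Y] [MeasurableSpace Y]
    {p : ℝ} {μ : Measure Y} (hp : 1 ≤ p) {u φ : Y → ℝ} (hu : MemN1p p μ u)
    (hφ : MemN1p p μ φ) (t : ℝ) : MemN1p p μ (fun y => u y + t * φ y) := by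
  obtain ⟨hu_meas, hu_Lp, gu, hgu, hgu_Lp⟩ := hu
  obtain ⟨hφ_meas, hφ_Lp, gφ, hgφ, hgφ_Lp⟩ := hφ
  refine ⟨hu_meas.add (hφ_meas.const_mul t), ?_, _, hgu.add_const_mul hgφ t, ?_⟩
  · refine lintegral_rpow_ne_top_of_le_add_const_mul hp (c := ENNReal.ofReal |t|)
      ENNReal.ofReal_ne_top (fun y => ?_) hu_meas.abs.ennreal_ofReal.aemeasurable hu_Lp hφ_Lp
    rw [← ENNReal.ofReal_mul (abs_nonneg t), ← ENNReal.ofReal_add (abs_nonneg _) (by positivity),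
      ← abs_mul]
    exact ENNReal.ofReal_le_ofReal (abs_add_le _ _)
  · exact lintegral_rpow_ne_top_of_le_add_const_mul hp ENNReal.ofReal_ne_top (fun y => le_rfl)
      hgu.1.aemeasurable hgu_Lp hgφ_Lp

namespace CheegerStructure

variable {X : Type*} [MetricSpace X] [MeasurableSpace X] {p : ℝ} {μ : Measure X}
  (S : CheegerStructure X p μ) (x : X)

theorem inn_add_right (u v w : Fin S.N → ℝ) :
    S.inn x u (v + w) = S.inn x u v + S.inn x u w := by
  rw [S.inn_symm, S.inn_add_left, S.inn_symm x v, S.inn_symm x w]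

theorem inn_smul_right (c : ℝ) (v w : Fin S.N → ℝ) : S.inn x v (c • w) = c * S.inn x v w := by
  rw [S.inn_symm, S.inn_smul_left, S.inn_symm]

theorem inn_add_smul_self (u v : Fin S.N → ℝ) (s : ℝ) :
    S.inn x (u + s • v) (u + s • v) =
      S.inn x u u + 2 * S.inn x u v * s + S.inn x v v * s ^ 2 := by
  simp only [S.inn_add_left, inn_add_right, S.inn_smul_left, inn_smul_right, S.inn_symm x v u]
  ring

theorem inn_sq_le (u v : Fin S.N → ℝ) : S.inn x u v ^ 2 ≤ S.inn x u u * S.inn x v v := by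
  have hq : ∀ s : ℝ, 0 ≤ S.inn x v v * (s * s) + 2 * S.inn x u v * s + S.inn x u u := fun s => by
    linarith [S.inn_add_smul_self x u v s, S.inn_nonneg x (u + s • v)]
  have := discrim_le_zero hq
  rw [discrim] at this
  nlinarith

theorem normAt_nonneg (v : Fin S.N → ℝ) : 0 ≤ S.normAt x v :=
  Real.sqrt_nonneg _

theorem normAt_sq (v : Fin S.N → ℝ) : S.normAt x v ^ 2 = S.inn x v v :=
  Real.sq_sqrt (S.inn_nonneg x v)

theorem normAt_rpow (v : Fin S.N → ℝ) (c : ℝ) : S.normAt x v ^ c = S.inn x v v ^ (c / 2) := by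
  rw [normAt, Real.sqrt_eq_rpow, ← Real.rpow_mul (S.inn_nonneg x v), one_div_mul_eq_div]

theorem abs_inn_le (u v : Fin S.N → ℝ) : |S.inn x u v| ≤ S.normAt x u * S.normAt x v := by
  rw [normAt, normAt, ← Real.sqrt_mul (S.inn_nonneg x u), ← Real.sqrt_sq_eq_abs]
  exact Real.sqrt_le_sqrt (S.inn_sq_le x u v)

theorem normAt_add_smul_le (u v : Fin S.N → ℝ) (s : ℝ) :
    S.normAt x (u + s • v) ≤ S.normAt x u + |s| * S.normAt x v := by
  have hcross : s * S.inn x u v ≤ |s| * (S.normAt x u * S.normAt x v) := by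
    calc s * S.inn x u v ≤ |s| * |S.inn x u v| := (le_abs_self _).trans (abs_mul s _).le
      _ ≤ _ := mul_le_mul_of_nonneg_left (S.abs_inn_le x u v) (abs_nonneg s)
  refine Real.sqrt_le_iff.2 ⟨by positivity [S.normAt_nonneg x u, S.normAt_nonneg x v], ?_⟩
  rw [inn_add_smul_self]
  nlinarith [S.normAt_sq x u, S.normAt_sq x v, sq_abs s]

theorem hasDerivAt_normAt_add_smul_rpow (hp : 1 < p) (u v : Fin S.N → ℝ) (t : ℝ) :
    HasDerivAt (fun s => S.normAt x (u + s • v) ^ p)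
      (p * (S.normAt x (u + t • v) ^ (p - 2) * S.inn x (u + t • v) v)) t := by
  have hq : ∀ s, 0 ≤ S.inn x u u + 2 * S.inn x u v * s + S.inn x v v * s ^ 2 := fun s => by
    rw [← inn_add_smul_self]
    exact S.inn_nonneg x _
  simp only [normAt_rpow, inn_add_smul_self]
  refine (hasDerivAt_quadratic_rpow hp hq t).congr_deriv ?_
  rw [S.inn_add_left, S.inn_smul_left, show (p - 2) / 2 = p / 2 - 1 by ring]
  ring

theorem abs_normAt_rpow_mul_inn_le (u v : Fin S.N → ℝ) :
    |S.normAt x u ^ (p - 2) * S.inn x u v| ≤ S.normAt x u ^ (p - 1) * S.normAt x v := by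
  rcases (S.normAt_nonneg x u).eq_or_lt with hzero | hpos
  · have hinn : S.inn x u v = 0 := abs_nonpos_iff.1 (by simpa [← hzero] using S.abs_inn_le x u v)
    rw [hinn, mul_zero, abs_zero]
    exact mul_nonneg (Real.rpow_nonneg (S.normAt_nonneg x u) _) (S.normAt_nonneg x v)
  · calc |S.normAt x u ^ (p - 2) * S.inn x u v|
        = S.normAt x u ^ (p - 2) * |S.inn x u v| := by
          rw [abs_mul, abs_of_nonneg (Real.rpow_nonneg hpos.le _)]
      _ ≤ S.normAt x u ^ (p - 2) * (S.normAt x u * S.normAt x v) :=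
          mul_le_mul_of_nonneg_left (S.abs_inn_le x u v) (Real.rpow_nonneg hpos.le _)
      _ = S.normAt x u ^ (p - 1) * S.normAt x v := by
          rw [← mul_assoc, ← Real.rpow_add_one hpos.ne']
          ring_nf

theorem abs_deriv_normAt_add_smul_rpow_le (hp : 1 ≤ p) (u v : Fin S.N → ℝ) {t : ℝ}
    (ht : |t| ≤ 1) :
    |p * (S.normAt x (u + t • v) ^ (p - 2) * S.inn x (u + t • v) v)| ≤
      p * (S.normAt x u + S.normAt x v) ^ p := by
  set r := S.normAt x u + S.normAt x v
  have hu := S.normAt_nonneg x u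
  have hv := S.normAt_nonneg x v
  have hle : S.normAt x (u + t • v) ≤ r :=
    (S.normAt_add_smul_le x u v t).trans (by nlinarith)
  rw [abs_mul, abs_of_pos (by linarith : (0 : ℝ) < p)]
  gcongr
  calc _ ≤ S.normAt x (u + t • v) ^ (p - 1) * S.normAt x v := S.abs_normAt_rpow_mul_inn_le x _ v
    _ ≤ r ^ (p - 1) * r := by
        gcongr
        · exact S.normAt_nonneg x _
        · linarith
    _ = r ^ p := by
        rcases (show 0 ≤ r from add_nonneg hu hv).eq_or_lt with hr | hr
        · rw [← hr, mul_zero, Real.zero_rpow (by linarith)]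
        · rw [← Real.rpow_add_one hr.ne', sub_add_cancel]

theorem hasDerivAt_integral_normAt_add_smul_rpow (hp : 1 < p) {ν : Measure X}
    {A B : X → Fin S.N → ℝ} (hAA : Measurable fun x => S.inn x (A x) (A x))
    (hAB : Measurable fun x => S.inn x (A x) (B x))
    (hBB : Measurable fun x => S.inn x (B x) (B x))
    (hA : MemLp (fun x => S.normAt x (A x)) (ENNReal.ofReal p) ν)
    (hB : MemLp (fun x => S.normAt x (B x)) (ENNReal.ofReal p) ν) :
    HasDerivAt (fun t : ℝ => ∫ x, S.normAt x (A x + t • B x) ^ p ∂ν)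
      (p * ∫ x, S.normAt x (A x) ^ (p - 2) * S.inn x (A x) (B x) ∂ν) 0 := by
  have hp0 : ENNReal.ofReal p ≠ 0 := (ENNReal.ofReal_pos.2 (by linarith)).ne'
  have hF_meas : ∀ t : ℝ, Measurable fun x => S.normAt x (A x + t • B x) ^ p := fun t => by
    simp only [normAt_rpow, inn_add_smul_self]
    fun_prop
  have hbound : Integrable (fun x => p * (S.normAt x (A x) + S.normAt x (B x)) ^ p) ν := by
    refine ((hA.add hB).integrable_norm_rpow hp0 ENNReal.ofReal_ne_top).const_mul p |>.congr ?_
    refine Eventually.of_forall fun x => ?_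
    simp only [Pi.add_apply, ENNReal.toReal_ofReal (by linarith : (0 : ℝ) ≤ p)]
    rw [Real.norm_of_nonneg (add_nonneg (S.normAt_nonneg x _) (S.normAt_nonneg x _))]
  have hF0 : Integrable (fun x => S.normAt x (A x + (0 : ℝ) • B x) ^ p) ν := by
    refine (hA.integrable_norm_rpow hp0 ENNReal.ofReal_ne_top).congr ?_
    refine Eventually.of_forall fun x => ?_
    simp [ENNReal.toReal_ofReal (by linarith : (0 : ℝ) ≤ p),
      Real.norm_of_nonneg (S.normAt_nonneg x _)]
  have key := hasDerivAt_integral_of_dominated_loc_of_deriv_le (μ := ν) (x₀ := (0 : ℝ))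
    (ball_mem_nhds 0 one_pos) (Eventually.of_forall fun t => (hF_meas t).aestronglyMeasurable)
    hF0 (by simp only [zero_smul, add_zero, normAt_rpow]; fun_prop)
    (Eventually.of_forall fun x t ht => S.abs_deriv_normAt_add_smul_rpow_le x hp.le (A x) (B x)
      (by simpa using (mem_ball_zero_iff.1 ht).le))
    hbound (Eventually.of_forall fun x t _ => S.hasDerivAt_normAt_add_smul_rpow x hp _ _ t)
  simpa only [zero_smul, add_zero, integral_const_mul] using key.2

theorem D_add_const_mul (u φ : X → ℝ) (t : ℝ) :
    S.D (fun x => u x + t * φ x) = fun x => S.D u x + t • S.D φ x := by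
  rw [show (fun x => u x + t * φ x) = u + fun x => t * φ x from rfl, S.D_add, S.D_smul]

theorem memLp_normAt_D (hp : 0 < p) {f : X → ℝ} (hf : MemN1p p μ f) :
    MemLp (fun x => S.normAt x (S.D f x)) (ENNReal.ofReal p) μ := by
  obtain ⟨C, -, hcomp⟩ := S.comparable
  obtain ⟨g, hg, hg_Lp⟩ := hf.2.2
  have hle := (hcomp f hf).2 g (hg.isWeakUpperGradient hp μ)
  refine ⟨(S.measurable_inn_D f f hf.1 hf.1).sqrt.aestronglyMeasurable, ?_⟩
  rw [eLpNorm_lt_top_iff_lintegral_rpow_enorm_lt_top (by simpa using hp) ENNReal.ofReal_ne_top,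
    ENNReal.toReal_ofReal hp.le]
  calc ∫⁻ x, ‖S.normAt x (S.D f x)‖ₑ ^ p ∂μ ≤ ∫⁻ x, (ENNReal.ofReal C * g x) ^ p ∂μ := by
        refine lintegral_mono_ae (hle.mono fun x hx => ?_)
        rw [Real.enorm_of_nonneg (S.normAt_nonneg x _)]
        exact ENNReal.rpow_le_rpow hx hp.le
    _ = ENNReal.ofReal C ^ p * ∫⁻ x, g x ^ p ∂μ := by
        simp_rw [ENNReal.mul_rpow_of_nonneg _ _ hp.le]
        exact lintegral_const_mul' _ _ (by finiteness)
    _ < ∞ := ENNReal.mul_lt_top (by finiteness) hg_Lp.lt_top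

theorem cheegerEnergy_ne_top (hp : 0 < p) {f : X → ℝ} (hf : MemN1p p μ f) (Ω : Set X) :
    cheegerEnergy S Ω f ≠ ∞ := by
  have hint := ((S.memLp_normAt_D hp hf).restrict Ω).integrable_norm_rpow
    (by simpa using hp) ENNReal.ofReal_ne_top
  simp only [ENNReal.toReal_ofReal hp.le, Real.norm_of_nonneg (S.normAt_nonneg _ _)] at hint
  exact hint.lintegral_lt_top.ne

theorem toReal_cheegerEnergy {f : X → ℝ} (hf : Measurable f) (Ω : Set X) :
    (cheegerEnergy S Ω f).toReal = ∫ x in Ω, S.normAt x (S.D f x) ^ p ∂μ :=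
  (integral_eq_lintegral_of_nonneg_ae
    (Eventually.of_forall fun x => Real.rpow_nonneg (S.normAt_nonneg x _) p)
    ((S.measurable_inn_D f f hf hf).sqrt.pow_const p).aestronglyMeasurable).symm

theorem cheegerForm_eq_zero_of_forall_cheegerEnergy_le (hp : 1 < p) {Ω : Set X} {u φ : X → ℝ}
    (hu : MemN1p p μ u) (hφ : MemN1p p μ φ)
    (hmin : ∀ t : ℝ, cheegerEnergy S Ω u ≤ cheegerEnergy S Ω (fun x => u x + t * φ x)) :
    cheegerForm S Ω u φ = 0 := by
  set G : ℝ → ℝ := fun t => ∫ x in Ω, S.normAt x (S.D u x + t • S.D φ x) ^ p ∂μ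
  have hG : ∀ t, G t = (cheegerEnergy S Ω (fun x => u x + t * φ x)).toReal := fun t => by
    rw [toReal_cheegerEnergy S (hu.add_const_mul hp.le hφ t).1, D_add_const_mul]
  have hlocal : IsLocalMin G 0 := Eventually.of_forall fun t => by
    rw [hG, hG]
    simpa using ENNReal.toReal_mono
      (S.cheegerEnergy_ne_top (by linarith) (hu.add_const_mul hp.le hφ t) Ω) (hmin t)
  have hderiv := S.hasDerivAt_integral_normAt_add_smul_rpow hp (ν := μ.restrict Ω)
    (S.measurable_inn_D u u hu.1 hu.1) (S.measurable_inn_D u φ hu.1 hφ.1)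
    (S.measurable_inn_D φ φ hφ.1 hφ.1) ((S.memLp_normAt_D (by linarith) hu).restrict Ω)
    ((S.memLp_normAt_D (by linarith) hφ).restrict Ω)
  have := hlocal.hasDerivAt_eq_zero hderiv
  exact (mul_eq_zero.1 this).resolve_left (by linarith)

end CheegerStructure

theorem capacitary_measure_annihilates_general
    {X : Type*} [MetricSpace X] [MeasurableSpace X]
    (p : ℝ) (hp : 1 < p) (μ : Measure X)
    (S : CheegerStructure X p μ)
    (Ω : Set X) (E : Set X)
    (uE : X → ℝ) (huE : IsCapacitaryPotential S E Ω uE)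
    (ν : Measure X) (hν : IsCapacitaryMeasure S Ω uE ν) :
    ∀ φ : X → ℝ, MemN1p0 p μ (Ω \ E) φ → ∫ x, φ x ∂ν = 0 := by
  intro φ ⟨hφ, hφ_zero⟩
  have hφΩ : MemN1p0 p μ Ω φ := ⟨hφ, fun x hx => hφ_zero x fun h => hx h.1⟩
  have hφE : ∀ x ∈ E, φ x = 0 := fun x hx => hφ_zero x fun h => h.2 hx
  obtain ⟨hu, hu_ge, -, hu_min⟩ := huE
  have hadm : ∀ t : ℝ, MemN1p0 p μ Ω (fun x => uE x + t * φ x) := fun t =>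
    ⟨hu.1.add_const_mul hp.le hφ t, fun x hx => by
      simp only [hu.2 x hx, hφΩ.2 x hx, mul_zero, add_zero]⟩
  have hqe : ∀ t : ℝ, QeOn p μ E (fun x => 1 ≤ uE x + t * φ x) := fun t => by
    unfold QeOn at hu_ge ⊢
    convert hu_ge using 2
    ext x
    simp +contextual [hφE]
  rw [← hν.2 φ hφΩ]
  exact S.cheegerForm_eq_zero_of_forall_cheegerEnergy_le hp hu.1 hφ fun t =>
    hu_min _ (hadm t) (hqe t)

/-- The capacitary measure `ν_E = T u_E` of `E ⊆ Ω` annihilates `N^{1,p}_0(Ω \ E)`: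
`∫_Ω φ dν_E = 0` for every `φ ∈ N^{1,p}_0(Ω \ E)`. -/
theorem capacitary_measure_annihilates
    {X : Type*} [MetricSpace X] [MeasurableSpace X] [BorelSpace X] [CompleteSpace X]
    (p : ℝ) (hp : 1 < p) (μ : Measure X)
    (hμ : IsDoubling μ) (hPI : SupportsPoincare p μ)
    (S : CheegerStructure X p μ)
    (Ω : Set X) (hΩo : IsOpen Ω) (hΩne : Ω.Nonempty) (hΩb : Bornology.IsBounded Ω)
    (hΩc : 0 < sobolevCapacity p μ Ωᶜ)
    (E : Set X) (hE : E ⊆ Ω) (hcap : varCap p μ E Ω ≠ ∞)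
    (uE : X → ℝ) (huE : IsCapacitaryPotential S E Ω uE)
    (ν : Measure X) (hν : IsCapacitaryMeasure S Ω uE ν) :
    ∀ φ : X → ℝ, MemN1p0 p μ (Ω \ E) φ → ∫ x, φ x ∂ν = 0 :=
  capacitary_measure_annihilates_general p hp μ S Ω E uE huE ν hν

end FinePotential
end
end

section
/- Let U ⊂ X be quasiopen. Then U = W₁ ∪ E₁ = W₂ ∖ E₂, where W₁ is a Borel set of type F_σ, W₂ is a Borel set of type G_δ, and C_p(E₁) = C_p(E₂) = 0. -/
/-! Pick open sets `G n` with `C_p(G n) ≤ 1/n` and `G n ∪ U` open, and let `N = ⋂ n, G n`, a set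
of capacity zero. Then `U ∪ N = ⋂ n, (G n ∪ U)` is `G_δ`, while `U \ N = ⋃ n, (G n ∪ U) \ G n` is
`F_σ`, each term being the intersection of an open and a closed set. Hence
`U = (U \ N) ∪ (U ∩ N) = (U ∪ N) \ (N \ U)`. -/

open MeasureTheory Metric Set Filter Topology
open scoped ENNReal NNReal

noncomputable section

namespace FinePotential

lemma exists_isClosed_iUnion_eq_of_isGδ_compl {X : Type*} [TopologicalSpace X] {s : Set X}
    (hs : IsGδ sᶜ) : ∃ F : ℕ → Set X, (∀ n, IsClosed (F n)) ∧ s = ⋃ n, F n := by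
  obtain ⟨O, hO, hsO⟩ := hs.eq_iInter_nat
  exact ⟨fun n => (O n)ᶜ, fun n => (hO n).isClosed_compl,
    by rw [← compl_iInter, ← hsO, compl_compl]⟩

section OpenUnion

variable {X : Type*} [TopologicalSpace X] {U : Set X} {G : ℕ → Set X}

lemma isGδ_union_iInter_of_isOpen_union (hGU : ∀ n, IsOpen (G n ∪ U)) :
    IsGδ (U ∪ ⋂ n, G n) := by
  rw [union_iInter]
  exact .iInter_of_isOpen fun n => union_comm (G n) U ▸ hGU n

lemma exists_isClosed_iUnion_eq_diff_iInter [PerfectlyNormalSpace X] (hG : ∀ n, IsOpen (G n))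
    (hGU : ∀ n, IsOpen (G n ∪ U)) :
    ∃ F : ℕ → Set X, (∀ n, IsClosed (F n)) ∧ U \ ⋂ n, G n = ⋃ n, F n := by
  refine exists_isClosed_iUnion_eq_of_isGδ_compl ?_
  have hsplit : ∀ n, Uᶜ ∪ G n = (G n ∪ U)ᶜ ∪ G n := fun n => by
    ext
    simp only [mem_union, mem_compl_iff]
    tauto
  rw [sdiff_eq, compl_inter, compl_compl, union_iInter]
  exact .iInter fun n => hsplit n ▸ (hGU n).isClosed_compl.isGδ.union (hG n).isGδ

end OpenUnion

section Capacity

variable {Y : Type*} [PseudoMetricSpace Y] [MeasurableSpace Y] {p : ℝ} {μ : Measure Y}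

lemma sobolevCapacity_mono {E G : Set Y} (h : E ⊆ G) :
    sobolevCapacity p μ E ≤ sobolevCapacity p μ G :=
  iInf_mono fun _ => iInf_mono fun _ => le_iInf fun hG => iInf_le _ fun x hx => hG x (h hx)

lemma sobolevCapacity_iInter_eq_zero {G : ℕ → Set Y}
    (hG : ∀ n : ℕ, sobolevCapacity p μ (G n) ≤ (n : ℝ≥0∞)⁻¹) :
    sobolevCapacity p μ (⋂ n, G n) = 0 :=
  nonpos_iff_eq_zero.1 <| ge_of_tendsto' ENNReal.tendsto_inv_nat_nhds_zero fun n =>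
    (sobolevCapacity_mono (iInter_subset G n)).trans (hG n)

end Capacity

section Quasiopen

variable {X : Type*} [MetricSpace X] [MeasurableSpace X] {p : ℝ} {μ : Measure X} {U : Set X}

lemma Quasiopen.exists_isOpen_seq (hU : Quasiopen p μ U) :
    ∃ G : ℕ → Set X, (∀ n, IsOpen (G n)) ∧ (∀ n, sobolevCapacity p μ (G n) ≤ (n : ℝ≥0∞)⁻¹) ∧
      ∀ n, IsOpen (G n ∪ U) := by
  choose G hG hcap hGU using fun n : ℕ =>
    hU (n : ℝ≥0∞)⁻¹ (ENNReal.inv_pos.2 (ENNReal.natCast_ne_top n))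
  exact ⟨G, hG, fun n => (hcap n).le, hGU⟩

lemma Quasiopen.exists_sobolevCapacity_eq_zero (hU : Quasiopen p μ U) :
    ∃ N : Set X, sobolevCapacity p μ N = 0 ∧
      (∃ F : ℕ → Set X, (∀ n, IsClosed (F n)) ∧ U \ N = ⋃ n, F n) ∧ IsGδ (U ∪ N) := by
  obtain ⟨G, hG, hcap, hGU⟩ := hU.exists_isOpen_seq
  exact ⟨⋂ n, G n, sobolevCapacity_iInter_eq_zero hcap,
    exists_isClosed_iUnion_eq_diff_iInter hG hGU, isGδ_union_iInter_of_isOpen_union hGU⟩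

end Quasiopen

theorem quasiopen_borel_decomposition_general
    {X : Type*} [MetricSpace X] [MeasurableSpace X]
    (p : ℝ) (μ : Measure X)
    (U : Set X) (hU : Quasiopen p μ U) :
    ∃ W₁ E₁ W₂ E₂ : Set X,
      (∃ F : ℕ → Set X, (∀ n, IsClosed (F n)) ∧ W₁ = ⋃ n, F n) ∧
      IsGδ W₂ ∧
      sobolevCapacity p μ E₁ = 0 ∧ sobolevCapacity p μ E₂ = 0 ∧
      U = W₁ ∪ E₁ ∧ U = W₂ \ E₂ := by
  obtain ⟨N, hN, hFσ, hGδ⟩ := hU.exists_sobolevCapacity_eq_zero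
  have hnull : ∀ {E}, E ⊆ N → sobolevCapacity p μ E = 0 := fun hE =>
    nonpos_iff_eq_zero.1 (hN ▸ sobolevCapacity_mono hE)
  refine ⟨U \ N, U ∩ N, U ∪ N, N \ U, hFσ, hGδ, hnull inter_subset_right,
    hnull sdiff_subset, (sdiff_union_inter U N).symm, ?_⟩
  ext x
  simp only [Set.mem_sdiff, mem_union]
  tauto

/-- Every quasiopen set `U` can be written as `U = W₁ ∪ E₁ = W₂ \ E₂`, where `W₁` is
an `F_σ` (Borel) set, `W₂` is a `G_δ` (Borel) set, and `C_p(E₁) = C_p(E₂) = 0`. -/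
theorem quasiopen_borel_decomposition
    {X : Type*} [MetricSpace X] [MeasurableSpace X] [BorelSpace X] [CompleteSpace X]
    (p : ℝ) (hp : 1 < p) (μ : Measure X)
    (hμ : IsDoubling μ) (hPI : SupportsPoincare p μ)
    (U : Set X) (hU : Quasiopen p μ U) :
    ∃ W₁ E₁ W₂ E₂ : Set X,
      (∃ F : ℕ → Set X, (∀ n, IsClosed (F n)) ∧ W₁ = ⋃ n, F n) ∧
      IsGδ W₂ ∧
      sobolevCapacity p μ E₁ = 0 ∧ sobolevCapacity p μ E₂ = 0 ∧
      U = W₁ ∪ E₁ ∧ U = W₂ \ E₂ :=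
  quasiopen_borel_decomposition_general p μ U hU

end FinePotential
end
end
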